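/- arXiv:2510.21593 — 3 statements merged into one kernel-verified Lean document; each statement's English description precedes it below -/
import Mathlib

section
/- The map from the infinite dihedral group D_∞ = ⟨s,t | t² = 1, (st)² = 1⟩ to GL(2,ℤ) sending s to the matrix A = [[2,-1],[1,0]] and t to B = [[0,1],[1,0]] is an injective group homomorphism. -/
/-!
`A = 1 + N` with `N = !![1, -1; 1, -1]` and `N * N = 0`, so `A ^ k = 1 + k • N` and `A` has
infinite order. `B` is an involution inverting `A` by conjugation, so `s ↦ A`, `t ↦ B` respects
the relations of `D_∞`. The kernel is trivial: rotations go to the distinct powers of `A`, and a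
reflection goes to `B * A ^ k`, which has determinant `-1`.
-/

open Function

namespace DihedralGroup

variable {G : Type*} [Group G] {n : ℕ} {a b : G} {ha : a ^ n = 1}

def zmodZMultiplesHom (a : G) (ha : a ^ n = 1) : ZMod n →+ Additive G :=
  ZMod.lift n ⟨zmultiplesHom (Additive G) (.ofMul a), by
    rw [zmultiplesHom_apply, natCast_zsmul, ← ofMul_pow, ha, ofMul_one]⟩

def zmodPow (a : G) (ha : a ^ n = 1) (i : ZMod n) : G :=
  (zmodZMultiplesHom a ha i).toMul

@[simp]
lemma zmodPow_intCast (k : ℤ) : zmodPow a ha k = a ^ k := by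
  simp [zmodPow, zmodZMultiplesHom, ZMod.lift_coe]

lemma zmodPow_add (i j : ZMod n) : zmodPow a ha (i + j) = zmodPow a ha i * zmodPow a ha j := by
  simp [zmodPow, zmodZMultiplesHom]

lemma zmodPow_zero : zmodPow a ha 0 = 1 := by
  simpa using zmodPow_intCast (ha := ha) 0

lemma zmodPow_one : zmodPow a ha 1 = a := by
  simpa using zmodPow_intCast (ha := ha) 1

lemma zmodPow_mem_zpowers (i : ZMod n) : zmodPow a ha i ∈ Subgroup.zpowers a := by
  obtain ⟨k, rfl⟩ := ZMod.intCast_surjective i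
  simp

lemma zmodPow_injective (hn : orderOf a = n) : Injective (zmodPow a ha) := by
  refine Additive.toMul.injective.comp ((ZMod.lift_injective n).2 fun m hm => ?_)
  rw [ZMod.intCast_zmod_eq_zero_iff_dvd, ← hn, orderOf_dvd_iff_zpow_eq_one]
  simpa [← ofMul_zpow] using hm

lemma mul_zmodPow (hab : b * a = a⁻¹ * b) (i : ZMod n) :
    b * zmodPow a ha i = zmodPow a ha (-i) * b := by
  obtain ⟨k, rfl⟩ := ZMod.intCast_surjective i
  rw [← Int.cast_neg, zmodPow_intCast, zmodPow_intCast, zpow_neg, ← inv_zpow]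
  exact SemiconjBy.zpow_right hab k

variable (a b ha) in
def lift (hb : b * b = 1) (hab : b * a = a⁻¹ * b) : DihedralGroup n →* G where
  toFun
    | r i => zmodPow a ha i
    | sr i => b * zmodPow a ha i
  map_one' := zmodPow_zero
  map_mul' := by
    rintro (i | i) (j | j)
    · exact zmodPow_add i j
    · show b * zmodPow a ha (j - i) = zmodPow a ha i * (b * zmodPow a ha j)
      rw [sub_eq_neg_add, zmodPow_add, ← mul_assoc, ← mul_assoc, mul_zmodPow hab, neg_neg]
    · show b * zmodPow a ha (i + j) = b * zmodPow a ha i * zmodPow a ha j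
      rw [zmodPow_add, mul_assoc]
    · show zmodPow a ha (j - i) = b * zmodPow a ha i * (b * zmodPow a ha j)
      rw [sub_eq_neg_add, zmodPow_add, mul_zmodPow hab, mul_assoc, ← mul_assoc b, hb, one_mul]

variable {hb : b * b = 1} {hab : b * a = a⁻¹ * b}

@[simp]
lemma lift_r (i : ZMod n) : lift a b ha hb hab (r i) = zmodPow a ha i := rfl

@[simp]
lemma lift_sr (i : ZMod n) : lift a b ha hb hab (sr i) = b * zmodPow a ha i := rfl

lemma lift_injective (hn : orderOf a = n) (hba : b ∉ Subgroup.zpowers a) :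
    Injective (lift a b ha hb hab) := by
  rw [injective_iff_map_eq_one]
  rintro (i | i) h
  · rw [lift_r, ← zmodPow_zero (ha := ha)] at h
    rw [zmodPow_injective hn h, r_zero]
  · rw [lift_sr, mul_eq_one_iff_eq_inv] at h
    exact absurd (h ▸ inv_mem (zmodPow_mem_zpowers i)) hba

end DihedralGroup

lemma one_add_pow_of_mul_self_eq_zero {R : Type*} [Semiring R] {N : R} (hN : N * N = 0) (k : ℕ) :
    (1 + N) ^ k = 1 + k • N := by
  induction k with
  | zero => simp
  | succ k ih =>
    rw [pow_succ, ih, add_mul, one_mul, mul_add, mul_one, smul_mul_assoc, hN, smul_zero, add_zero,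
      succ_nsmul, add_assoc, add_comm N]

namespace InfiniteDihedralRep

def A : GL (Fin 2) ℤ :=
  ⟨!![2, -1; 1, 0], !![0, 1; -1, 2], by decide, by decide⟩

def B : GL (Fin 2) ℤ :=
  ⟨!![0, 1; 1, 0], !![0, 1; 1, 0], by decide, by decide⟩

lemma B_mul_self : B * B = 1 := Units.ext (by decide)

lemma B_mul_A : B * A = A⁻¹ * B := Units.ext (by decide)

lemma orderOf_A : orderOf A = 0 := by
  rw [orderOf_eq_zero_iff, ← Units.isOfFinOrder_val, isOfFinOrder_iff_pow_eq_one]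
  rintro ⟨k, hk, hAk⟩
  have hA : (A : Matrix (Fin 2) (Fin 2) ℤ) = 1 + !![1, -1; 1, -1] := by decide
  rw [hA, one_add_pow_of_mul_self_eq_zero (by decide), add_eq_left] at hAk
  exact hk.ne' (by simpa using congrFun (congrFun hAk 1) 0)

lemma B_notMem_zpowers_A : B ∉ Subgroup.zpowers A := by
  rintro ⟨k, hk⟩
  have hdet := congrArg Matrix.GeneralLinearGroup.det hk
  have hA : Matrix.GeneralLinearGroup.det A = 1 := Units.ext (by decide)
  have hB : Matrix.GeneralLinearGroup.det B = -1 := Units.ext (by decide)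
  rw [map_zpow, hA, hB, one_zpow] at hdet
  exact absurd hdet (by decide)

end InfiniteDihedralRep

/-- The map from the infinite dihedral group `D_∞ = ⟨s,t | t² = 1, (st)² = 1⟩`
(Mathlib's `DihedralGroup 0`, with `s = r 1` and `t = sr 0`) to `GL(2,ℤ)` sending
`s ↦ A = !![2,-1;1,0]` and `t ↦ B = !![0,1;1,0]` is an injective group homomorphism. -/
theorem stmt0 :
    ∃ f : DihedralGroup 0 →* Matrix.GeneralLinearGroup (Fin 2) ℤ,
      Function.Injective f ∧
      (f (DihedralGroup.r 1) : Matrix (Fin 2) (Fin 2) ℤ) = !![2, -1; 1, 0] ∧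
      (f (DihedralGroup.sr 0) : Matrix (Fin 2) (Fin 2) ℤ) = !![0, 1; 1, 0] := by
  open DihedralGroup InfiniteDihedralRep in
  refine ⟨lift A B (pow_zero A) B_mul_self B_mul_A, lift_injective orderOf_A B_notMem_zpowers_A,
    ?_, ?_⟩
  · rw [lift_r, zmodPow_one]
    rfl
  · rw [lift_sr, zmodPow_zero, mul_one]
    rfl
end

section
/- For any integer m ≥ 3, the map from the dihedral group D_{2m} of order 2m to GL(2, ℤ/mℤ) sending the rotation generator s to [A]_m = [[2,-1],[1,0]] mod m and the reflection generator t to [B]_m = [[0,1],[1,0]] mod m is an injective group homomorphism. -/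
/-!
With `N = !![1, -1; 1, -1]` and `B = !![0, 1; 1, 0]` one has `N * N = 0`, `B * B = 1`,
`B * N = N` and `N * B = -N`. Hence `r i ↦ 1 + i • N` (so `r 1 ↦ A`) and `sr i ↦ B + i • N`
respect the multiplication rules of `DihedralGroup n`. A rotation `r i` maps to `1` only if
`i = 0`, read off the lower left entry, and a reflection never maps to `1` once `2 ≠ 0`,
since its image has trace `0` while `1` has trace `2`.
-/

namespace DihedralGroup

open Matrix

variable {n : ℕ}

def nilMatrix (n : ℕ) : Matrix (Fin 2) (Fin 2) (ZMod n) := !![1, -1; 1, -1]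

def swapMatrix (n : ℕ) : Matrix (Fin 2) (Fin 2) (ZMod n) := !![0, 1; 1, 0]

theorem nilMatrix_mul_self : nilMatrix n * nilMatrix n = 0 := by
  ext i j; fin_cases i <;> fin_cases j <;> simp [nilMatrix]

theorem swapMatrix_mul_self : swapMatrix n * swapMatrix n = 1 := by
  ext i j; fin_cases i <;> fin_cases j <;> simp [swapMatrix]

theorem swapMatrix_mul_nilMatrix : swapMatrix n * nilMatrix n = nilMatrix n := by
  ext i j; fin_cases i <;> fin_cases j <;> simp [swapMatrix, nilMatrix]

theorem nilMatrix_mul_swapMatrix : nilMatrix n * swapMatrix n = -nilMatrix n := by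
  ext i j; fin_cases i <;> fin_cases j <;> simp [swapMatrix, nilMatrix]

def toMatrix : DihedralGroup n → Matrix (Fin 2) (Fin 2) (ZMod n)
  | r i => 1 + i • nilMatrix n
  | sr i => swapMatrix n + i • nilMatrix n

theorem toMatrix_mul (a b : DihedralGroup n) : toMatrix (a * b) = toMatrix a * toMatrix b := by
  cases a <;> cases b <;>
    simp only [toMatrix, r_mul_r, r_mul_sr, sr_mul_r, sr_mul_sr, mul_add, add_mul, one_mul,
      mul_one, add_zero, smul_mul_assoc, mul_smul_comm, nilMatrix_mul_self,
      swapMatrix_mul_self, swapMatrix_mul_nilMatrix, nilMatrix_mul_swapMatrix, smul_zero,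
      smul_neg, add_smul, sub_smul] <;> abel

def toMatrixHom : DihedralGroup n →* Matrix (Fin 2) (Fin 2) (ZMod n) where
  toFun := toMatrix
  map_one' := by simp [toMatrix, ← r_zero]
  map_mul' := toMatrix_mul

def toGL : DihedralGroup n →* GL (Fin 2) (ZMod n) := toMatrixHom.toHomUnits

theorem coe_toGL (g : DihedralGroup n) : (toGL g : Matrix (Fin 2) (Fin 2) (ZMod n)) = toMatrix g :=
  rfl

theorem trace_toMatrix_sr (i : ZMod n) : (toMatrix (sr i)).trace = 0 := by
  simp [toMatrix, swapMatrix, nilMatrix, trace_fin_two]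

theorem toGL_injective (h2 : (2 : ZMod n) ≠ 0) : Function.Injective (toGL (n := n)) := by
  rw [injective_iff_map_eq_one]
  intro g hg
  replace hg : toMatrix g = 1 := congrArg Units.val hg
  cases g with
  | r i =>
    exact congrArg r (by simpa [toMatrix, nilMatrix] using congrFun (congrFun hg 1) 0)
  | sr i =>
    have htrace := congrArg trace hg
    rw [trace_toMatrix_sr, trace_one, Fintype.card_fin] at htrace
    exact absurd (by exact_mod_cast htrace.symm) h2

end DihedralGroup

/-- For any integer `m ≥ 3`, the map from the dihedral group `D_{2m}` of order `2m`
(Mathlib's `DihedralGroup m`, with rotation generator `s = r 1` and reflection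
generator `t = sr 0`) to `GL(2, ℤ/mℤ)` sending `s ↦ !![2,-1;1,0] mod m` and
`t ↦ !![0,1;1,0] mod m` is an injective group homomorphism. -/
theorem stmt4 (m : ℕ) (hm : 3 ≤ m) :
    ∃ f : DihedralGroup m →* Matrix.GeneralLinearGroup (Fin 2) (ZMod m),
      Function.Injective f ∧
      (f (DihedralGroup.r 1) : Matrix (Fin 2) (Fin 2) (ZMod m)) = !![2, -1; 1, 0] ∧
      (f (DihedralGroup.sr 0) : Matrix (Fin 2) (Fin 2) (ZMod m)) = !![0, 1; 1, 0] := by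
  have h2 : (2 : ZMod m) ≠ 0 := by
    have : Fact (1 < m) := ⟨by omega⟩
    rw [ne_eq, ← ZMod.val_eq_zero, ZMod.val_two_eq_two_mod, Nat.mod_eq_of_lt hm]
    norm_num
  refine ⟨DihedralGroup.toGL, DihedralGroup.toGL_injective h2, ?_, ?_⟩
  · ext i j; fin_cases i <;> fin_cases j <;>
      simp [DihedralGroup.coe_toGL, DihedralGroup.toMatrix, DihedralGroup.nilMatrix, one_add_one_eq_two]
  · simp [DihedralGroup.coe_toGL, DihedralGroup.toMatrix, DihedralGroup.swapMatrix]
end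

section
/- Define M_i, N_i ∈ GL_n(ℤ) by: M_i acts as [[2,-1],[1,0]] on coordinates i,i+1 and as the identity elsewhere, and N_i acts as [[0,1],[1,0]] on coordinates i,i+1 and identity elsewhere. Then N_i M_{i+1} M_i = M_{i+1} M_i N_{i+1} for all valid i, i.e., the virtual integral Burau representation respects the welded (forbidden) relation. -/
/-- The integral Burau matrix (Burau at `t = -1`) of the braid generator `σ_i`:
it acts as `!![2,-1;1,0]` on coordinates `i, i+1` and as the identity elsewhere. -/
def burauMinusMat (n : ℕ) (i : Fin n) : Matrix (Fin (n + 1)) (Fin (n + 1)) ℤ :=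
  fun j k =>
    if j = i.castSucc ∧ k = i.castSucc then 2
    else if j = i.castSucc ∧ k = i.succ then -1
    else if j = i.succ ∧ k = i.castSucc then 1
    else if j = i.succ ∧ k = i.succ then 0
    else if j = k then 1 else 0
/-- The permutation matrix of the virtual generator `τ_i`: it acts as `!![0,1;1,0]`
on coordinates `i, i+1` and as the identity elsewhere. -/
def virtTauMat (n : ℕ) (i : Fin n) : Matrix (Fin (n + 1)) (Fin (n + 1)) ℤ :=
  fun j k =>
    if j = i.castSucc ∧ k = i.castSucc then 0
    else if j = i.castSucc ∧ k = i.succ then 1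
    else if j = i.succ ∧ k = i.castSucc then 1
    else if j = i.succ ∧ k = i.succ then 0
    else if j = k then 1 else 0

/-! Both `M_i` and `N_i` differ from the identity only in the `2 × 2` block on the coordinates
`i, i+1`, so each is `1` plus a signed sum of four matrix units. The welded relation therefore
only involves the three coordinates `i, i+1, i+2`, and it follows by multiplying out matrix
units with `E_ab E_cd = δ_bc E_ad`. -/

open Matrix

section Blocks

variable {ι R : Type*} [DecidableEq ι] [Ring R]

def burauBlock (a b : ι) : Matrix ι ι R :=
  1 + single a a 1 - single a b 1 + single b a 1 - single b b 1

def swapBlock (a b : ι) : Matrix ι ι R :=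
  1 - single a a 1 + single a b 1 + single b a 1 - single b b 1

theorem swapBlock_mul_burauBlock_mul_burauBlock [Fintype ι] {a b c : ι}
    (hab : a ≠ b) (hbc : b ≠ c) (hac : a ≠ c) :
    swapBlock a b * burauBlock b c * (burauBlock a b : Matrix ι ι R)
      = burauBlock b c * burauBlock a b * swapBlock b c := by
  simp only [swapBlock, burauBlock, mul_add, add_mul, mul_sub, sub_mul, one_mul, mul_one,
    single_mul_single_same, single_mul_single_of_ne, hab, hbc, hac, hab.symm, hbc.symm,
    hac.symm, ne_eq, not_false_iff, add_zero, sub_zero]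
  abel

end Blocks

theorem burauMinusMat_eq_burauBlock (n : ℕ) (i : Fin n) :
    burauMinusMat n i = burauBlock i.castSucc i.succ := by
  ext r k
  simp only [burauMinusMat, burauBlock, Matrix.add_apply, Matrix.sub_apply, one_apply,
    single_apply]
  split_ifs <;> simp only [Fin.ext_iff, Fin.val_castSucc, Fin.val_succ, not_and] at * <;> omega

theorem virtTauMat_eq_swapBlock (n : ℕ) (i : Fin n) :
    virtTauMat n i = swapBlock i.castSucc i.succ := by
  ext r k
  simp only [virtTauMat, swapBlock, Matrix.add_apply, Matrix.sub_apply, one_apply,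
    single_apply]
  split_ifs <;> simp only [Fin.ext_iff, Fin.val_castSucc, Fin.val_succ, not_and] at * <;> omega

/-- With `M_i = ρ_v(σ_i)` the integral Burau matrix and `N_i = ρ_v(τ_i)` the transposition
matrix, we have `N_i M_{i+1} M_i = M_{i+1} M_i N_{i+1}`: the virtual integral Burau
representation respects the welded (forbidden) relation. -/
theorem stmt15 (n : ℕ) (i j : Fin n) (h : (j : ℕ) = (i : ℕ) + 1) :
    virtTauMat n i * burauMinusMat n j * burauMinusMat n i
      = burauMinusMat n j * burauMinusMat n i * virtTauMat n j := by
  have hj : j.castSucc = i.succ := Fin.ext (by simp [h])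
  simp only [burauMinusMat_eq_burauBlock, virtTauMat_eq_swapBlock, hj]
  exact swapBlock_mul_burauBlock_mul_burauBlock Fin.castSucc_lt_succ.ne
    (by simp [Fin.ext_iff, h]) (by simp [Fin.ext_iff, h]; omega)
end
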